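/- arXiv:2208.09724 — 11 statements merged into one kernel-verified Lean document; each statement's English description precedes it below -/
import Mathlib

section
/- In any conic idempotent residuated lattice, the map γ(x) := x^{ℓr} ∧ x^{rℓ}, where x^ℓ = 1/x and x^r = x\1 (so that γ(x) = ((1/x)\1) ∧ (1/(x\1))), is a closure operator satisfying γ(x)·γ(y) ≤ γ(x·y), i.e., γ is a nucleus. -/
/-- `γ(x) = x^{ℓr} ∧ x^{rℓ}` where `x^ℓ = 1/x = rd 1 x` and `x^r = x\1 = ld x 1`. -/
def gam {A : Type*} [Lattice A] [One A] (ld rd : A → A → A) (x : A) : A :=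
  ld (rd 1 x) 1 ⊓ rd 1 (ld x 1)

/-- In a conic idempotent residuated lattice, γ is a closure operator that is a nucleus. -/
theorem stmt0 {A : Type*} [Lattice A] [Monoid A]
    (ld rd : A → A → A)
    (resl : ∀ x y z : A, x * y ≤ z ↔ y ≤ ld x z)
    (resr : ∀ x y z : A, x * y ≤ z ↔ x ≤ rd z y)
    (conic : ∀ a : A, a ≤ 1 ∨ 1 ≤ a)
    (idem : ∀ x : A, x * x = x) :
    (∀ x : A, x ≤ gam ld rd x) ∧
    (∀ x y : A, x ≤ y → gam ld rd x ≤ gam ld rd y) ∧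
    (∀ x : A, gam ld rd (gam ld rd x) = gam ld rd x) ∧
    (∀ x y : A, gam ld rd x * gam ld rd y ≤ gam ld rd (x * y)) := by
  -- monotonicity of multiplication
  have mule : ∀ {a b c d : A}, a ≤ b → c ≤ d → a * c ≤ b * d := by
    intro a b c d h1 h2
    have s1 : a * c ≤ b * c :=
      (resr a c (b * c)).mpr (h1.trans ((resr b c (b * c)).mp le_rfl))
    have s2 : b * c ≤ b * d :=
      (resl b c (b * d)).mpr (h2.trans ((resl b d (b * d)).mp le_rfl))
    exact s1.trans s2
  -- basic residuation facts
  have hLx : ∀ x : A, rd 1 x * x ≤ 1 := fun x => (resr (rd 1 x) x 1).mpr le_rfl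
  have hxR : ∀ x : A, x * ld x 1 ≤ 1 := fun x => (resl x (ld x 1) 1).mpr le_rfl
  have le_lr : ∀ x : A, x ≤ ld (rd 1 x) 1 := fun x => (resl (rd 1 x) x 1).mp (hLx x)
  have le_rl : ∀ x : A, x ≤ rd 1 (ld x 1) := fun x => (resr x (ld x 1) 1).mp (hxR x)
  have ext : ∀ x : A, x ≤ gam ld rd x := fun x => le_inf (le_lr x) (le_rl x)
  have l_anti : ∀ {a b : A}, a ≤ b → rd 1 b ≤ rd 1 a := by
    intro a b h
    exact (resr (rd 1 b) a 1).mp ((mule le_rfl h).trans (hLx b))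
  have r_anti : ∀ {a b : A}, a ≤ b → ld b 1 ≤ ld a 1 := by
    intro a b h
    exact (resl a (ld b 1) 1).mp ((mule h le_rfl).trans (hxR b))
  have mono : ∀ x y : A, x ≤ y → gam ld rd x ≤ gam ld rd y := by
    intro x y h
    exact inf_le_inf (r_anti (l_anti h)) (l_anti (r_anti h))
  -- γ fixes the unary residuals of x
  have gamL : ∀ x : A, rd 1 (gam ld rd x) = rd 1 x := by
    intro x
    refine le_antisymm (l_anti (ext x)) ?_
    refine (resr (rd 1 x) (gam ld rd x) 1).mp ?_
    exact (mule le_rfl (inf_le_left : gam ld rd x ≤ ld (rd 1 x) 1)).trans (hxR (rd 1 x))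
  have gamR : ∀ x : A, ld (gam ld rd x) 1 = ld x 1 := by
    intro x
    refine le_antisymm (r_anti (ext x)) ?_
    refine (resl (gam ld rd x) (ld x 1) 1).mp ?_
    exact (mule (inf_le_right : gam ld rd x ≤ rd 1 (ld x 1)) le_rfl).trans (hLx (ld x 1))
  have gidem : ∀ x : A, gam ld rd (gam ld rd x) = gam ld rd x := by
    intro x
    show ld (rd 1 (gam ld rd x)) 1 ⊓ rd 1 (ld (gam ld rd x) 1) = gam ld rd x
    rw [gamL, gamR]; rfl
  -- sign lemmas
  have one_le_l : ∀ {x : A}, x ≤ 1 → (1 : A) ≤ rd 1 x := by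
    intro x h
    exact (resr 1 x 1).mp (by simpa using h)
  have r_one : ld (1 : A) 1 ≤ 1 := by
    have := (resl 1 (ld (1 : A) 1) 1).mpr le_rfl
    simpa using this
  have gam_neg : ∀ {x : A}, x ≤ 1 → gam ld rd x ≤ 1 := by
    intro x h
    exact inf_le_left.trans ((r_anti (one_le_l h)).trans r_one)
  -- negative elements multiply as meet
  have neg_mul : ∀ {a b : A}, a ≤ 1 → b ≤ 1 → a * b = a ⊓ b := by
    intro a b ha hb
    refine le_antisymm (le_inf ?_ ?_) ?_
    · have : a * b ≤ a * 1 := mule le_rfl hb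
      simpa using this
    · have : a * b ≤ 1 * b := mule ha le_rfl
      simpa using this
    · calc a ⊓ b = (a ⊓ b) * (a ⊓ b) := (idem _).symm
        _ ≤ a * b := mule inf_le_left inf_le_right
  -- 1/w is γ-closed
  have gam_l_closed : ∀ w : A, gam ld rd (rd 1 w) ≤ rd 1 w := fun w =>
    inf_le_right.trans (l_anti (le_lr w))
  refine ⟨ext, mono, gidem, ?_⟩
  intro x y
  rcases conic x with hx | hx <;> rcases conic y with hy | hy
  · -- x ≤ 1, y ≤ 1
    have hgx := gam_neg hx
    have hgy := gam_neg hy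
    rw [neg_mul hgx hgy]
    refine le_inf ?_ ?_
    · -- ≤ ld (rd 1 (x*y)) 1
      refine (resl (rd 1 (x * y)) _ 1).mp ?_
      have hs : rd 1 (x * y) * x * y ≤ 1 := by
        rw [mul_assoc]; exact hLx (x * y)
      rcases conic (rd 1 (x * y) * x) with hu | hu
      · have hsx : rd 1 (x * y) ≤ rd 1 (gam ld rd x) := by
          rw [gamL]; exact (resr _ x 1).mp hu
        exact (mule hsx (inf_le_left : gam ld rd x ⊓ gam ld rd y ≤ gam ld rd x)).trans
          (hLx (gam ld rd x))
      · have h1 : rd 1 (x * y) ≤ rd 1 (x * y) * x := by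
          calc rd 1 (x * y) = rd 1 (x * y) * 1 := (mul_one _).symm
            _ ≤ rd 1 (x * y) * (rd 1 (x * y) * x) := mule le_rfl hu
            _ = rd 1 (x * y) * x := by rw [← mul_assoc, idem]
        have hsy : rd 1 (x * y) * y ≤ 1 := (mule h1 le_rfl).trans hs
        have hsy' : rd 1 (x * y) ≤ rd 1 (gam ld rd y) := by
          rw [gamL]; exact (resr _ y 1).mp hsy
        exact (mule hsy' (inf_le_right : gam ld rd x ⊓ gam ld rd y ≤ gam ld rd y)).trans
          (hLx (gam ld rd y))
    · -- ≤ rd 1 (ld (x*y) 1)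
      refine (resr _ (ld (x * y) 1) 1).mp ?_
      have ht : x * (y * ld (x * y) 1) ≤ 1 := by
        rw [← mul_assoc]; exact hxR (x * y)
      rcases conic (y * ld (x * y) 1) with hv | hv
      · have htv : ld (x * y) 1 ≤ ld (gam ld rd y) 1 := by
          rw [gamR]; exact (resl y _ 1).mp hv
        exact (mule (inf_le_right : gam ld rd x ⊓ gam ld rd y ≤ gam ld rd y) htv).trans
          (hxR (gam ld rd y))
      · have h1 : ld (x * y) 1 ≤ y * ld (x * y) 1 := by
          calc ld (x * y) 1 = 1 * ld (x * y) 1 := (one_mul _).symm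
            _ ≤ (y * ld (x * y) 1) * ld (x * y) 1 := mule hv le_rfl
            _ = y * ld (x * y) 1 := by rw [mul_assoc, idem]
        have hxt : x * ld (x * y) 1 ≤ 1 := (mule le_rfl h1).trans ht
        have hxt' : ld (x * y) 1 ≤ ld (gam ld rd x) 1 := by
          rw [gamR]; exact (resl x _ 1).mp hxt
        exact (mule (inf_le_left : gam ld rd x ⊓ gam ld rd y ≤ gam ld rd x) hxt').trans
          (hxR (gam ld rd x))
  · -- x ≤ 1 ≤ y
    rcases conic (x * y) with hxy | hxy
    · -- x*y ≤ 1
      have hgxly : gam ld rd x ≤ rd 1 (gam ld rd y) := by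
        rw [gamL]
        exact (mono x (rd 1 y) ((resr x y 1).mp hxy)).trans (gam_l_closed y)
      have hw1 : gam ld rd x * gam ld rd y ≤ 1 :=
        (mule hgxly le_rfl).trans (hLx (gam ld rd y))
      have hwx : gam ld rd x * gam ld rd y ≤ gam ld rd x := by
        have e1 : gam ld rd x * (gam ld rd x * gam ld rd y) = gam ld rd x * gam ld rd y := by
          rw [← mul_assoc, idem]
        have e2 := neg_mul (gam_neg hx) hw1
        rw [e1] at e2
        calc gam ld rd x * gam ld rd y = gam ld rd x ⊓ (gam ld rd x * gam ld rd y) := e2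
          _ ≤ gam ld rd x := inf_le_left
      refine hwx.trans (mono x (x * y) ?_)
      calc x = x * 1 := (mul_one x).symm
        _ ≤ x * y := mule le_rfl hy
    · -- 1 ≤ x*y
      have hy' : y ≤ x * y := by
        calc y = 1 * y := (one_mul y).symm
          _ ≤ (x * y) * y := mule hxy le_rfl
          _ = x * y := by rw [mul_assoc, idem]
      calc gam ld rd x * gam ld rd y ≤ 1 * gam ld rd y := mule (gam_neg hx) le_rfl
        _ = gam ld rd y := one_mul _
        _ ≤ gam ld rd (x * y) := mono y (x * y) hy'
  · -- y ≤ 1 ≤ x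
    rcases conic (x * y) with hxy | hxy
    · -- x*y ≤ 1
      have hgxly : gam ld rd x ≤ rd 1 (gam ld rd y) := by
        rw [gamL]
        exact (mono x (rd 1 y) ((resr x y 1).mp hxy)).trans (gam_l_closed y)
      have hw1 : gam ld rd x * gam ld rd y ≤ 1 :=
        (mule hgxly le_rfl).trans (hLx (gam ld rd y))
      have hwy : gam ld rd x * gam ld rd y ≤ gam ld rd y := by
        have e1 : (gam ld rd x * gam ld rd y) * gam ld rd y = gam ld rd x * gam ld rd y := by
          rw [mul_assoc, idem]
        have e2 := neg_mul hw1 (gam_neg hy)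
        rw [e1] at e2
        calc gam ld rd x * gam ld rd y
            = (gam ld rd x * gam ld rd y) ⊓ gam ld rd y := e2
          _ ≤ gam ld rd y := inf_le_right
      refine hwy.trans (mono y (x * y) ?_)
      calc y = 1 * y := (one_mul y).symm
        _ ≤ x * y := mule hx le_rfl
    · -- 1 ≤ x*y
      have hx' : x ≤ x * y := by
        calc x = x * 1 := (mul_one x).symm
          _ ≤ x * (x * y) := mule le_rfl hxy
          _ = x * y := by rw [← mul_assoc, idem]
      calc gam ld rd x * gam ld rd y ≤ gam ld rd x * 1 := mule le_rfl (gam_neg hy)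
        _ = gam ld rd x := mul_one _
        _ ≤ gam ld rd (x * y) := mono x (x * y) hx'
  · -- 1 ≤ x, 1 ≤ y
    have hx' : x ≤ x * y := by
      calc x = x * 1 := (mul_one x).symm
        _ ≤ x * y := mule le_rfl hy
    have hy' : y ≤ x * y := by
      calc y = 1 * y := (one_mul y).symm
        _ ≤ x * y := mule hx le_rfl
    calc gam ld rd x * gam ld rd y
        ≤ gam ld rd (x * y) * gam ld rd (x * y) :=
          mule (mono x (x * y) hx') (mono y (x * y) hy')
      _ = gam ld rd (x * y) := idem _
end

section
/- In a conic idempotent residuated lattice, for every element x, both x^ℓ and x^r are conical elements (comparable to every element of the lattice), and both have sign opposite to the sign of x (if x ≤ 1 then 1 ≤ x^ℓ and 1 ≤ x^r; if 1 ≤ x then x^ℓ ≤ 1 and x^r ≤ 1). -/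
/-!
For `a ≤ 1 ≤ b` in an idempotent ordered monoid, the products `a * b` and `b * a` are `a` or `b`,
and which one is decided by the side of `1` on which the product lies. Write `r = x\1`.
If `x ≤ 1` then `1 ≤ r`, and the only `y` not obviously below `r` are those with `1 ≤ x * y`,
i.e. `x * y = y`; then `t = x\y` lies above `r` and `y` with `x * t = t`, so `r ≤ t ≤ y`.
If `1 ≤ x` then `r ≤ 1` and `x * r = r`; a `y ≤ 1` with `1 ≤ x * y` satisfies `x * y = x`,
hence `x * (y * r) = r ≤ 1`, which forces `r = y * r ≤ y`.
The left residual `1/x` is `x\1` computed in the opposite monoid.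
-/

open MulOpposite

namespace MulOpposite

variable {α : Type*} [Mul α] [Preorder α]

instance [MulLeftMono α] : MulRightMono αᵐᵒᵖ :=
  ⟨fun c _ _ h => mul_le_mul_right (α := α) h c.unop⟩

instance [MulRightMono α] : MulLeftMono αᵐᵒᵖ :=
  ⟨fun c _ _ h => mul_le_mul_left (α := α) h c.unop⟩

end MulOpposite

section IdempotentOrderedMonoid

variable {M : Type*} [Monoid M] [PartialOrder M] {a b : M}

theorem mul_eq_left_of_one_le_mul [MulLeftMono M] (ha : IsIdempotentElem a) (hb : b ≤ 1)
    (h : 1 ≤ a * b) : a * b = a := by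
  refine le_antisymm (mul_le_of_le_one_right' hb) ?_
  calc a ≤ a * (a * b) := le_mul_of_one_le_right' h
    _ = a * b := by rw [← mul_assoc, ha.eq]

theorem mul_eq_right_of_mul_le_one [MulRightMono M] (hb : IsIdempotentElem b) (ha : 1 ≤ a)
    (h : a * b ≤ 1) : a * b = b := by
  refine le_antisymm ?_ (le_mul_of_one_le_left' ha)
  calc a * b = a * b * b := by rw [mul_assoc, hb.eq]
    _ ≤ b := mul_le_of_le_one_left' h

theorem mul_eq_right_of_one_le_mul [MulRightMono M] (hb : IsIdempotentElem b) (ha : a ≤ 1)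
    (h : 1 ≤ a * b) : a * b = b := by
  refine le_antisymm (mul_le_of_le_one_left' ha) ?_
  calc b ≤ a * b * b := le_mul_of_one_le_left' h
    _ = a * b := by rw [mul_assoc, hb.eq]

end IdempotentOrderedMonoid

section Residuated

variable {A : Type*} [PartialOrder A] [Monoid A] {ld rd : A → A → A}

theorem mulLeftMono_of_residual (resl : ∀ x y z : A, x * y ≤ z ↔ y ≤ ld x z) : MulLeftMono A :=
  ⟨fun c a b h => (resl c a (c * b)).2 (h.trans ((resl c b _).1 le_rfl))⟩

theorem mulRightMono_of_residual (resr : ∀ x y z : A, x * y ≤ z ↔ x ≤ rd z y) : MulRightMono A :=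
  ⟨fun c a b h => (resr a c (b * c)).2 (h.trans ((resr b c _).1 le_rfl))⟩

variable (resl : ∀ x y z : A, x * y ≤ z ↔ y ≤ ld x z)
include resl

theorem one_le_ld_one {x : A} (hx : x ≤ 1) : 1 ≤ ld x 1 :=
  (resl x 1 1).1 (by rwa [mul_one])

theorem ld_one_le_one [MulRightMono A] {x : A} (hx : 1 ≤ x) : ld x 1 ≤ 1 :=
  (le_mul_of_one_le_left' hx).trans ((resl x _ 1).2 le_rfl)

variable [MulLeftMono A] [MulRightMono A] (conic : ∀ a : A, a ≤ 1 ∨ 1 ≤ a)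
  (idem : ∀ x : A, x * x = x)
include conic idem

theorem ld_one_comparable_of_le_one {x : A} (hx : x ≤ 1) (y : A) :
    ld x 1 ≤ y ∨ y ≤ ld x 1 := by
  have hr : 1 ≤ ld x 1 := one_le_ld_one resl hx
  rcases conic y with hy | hy
  · exact .inr (hy.trans hr)
  rcases conic (x * y) with hxy | hxy
  · exact .inr ((resl x y 1).1 hxy)
  have hxy_eq : x * y = y := mul_eq_right_of_one_le_mul (idem y) hx hxy
  have hrt : ld x 1 ≤ ld x y := (resl x _ y).1 (((resl x _ 1).2 le_rfl).trans hy)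
  have hyt : y ≤ ld x y := (resl x y y).1 hxy_eq.le
  have hxt : x * ld x y = ld x y :=
    mul_eq_right_of_one_le_mul (idem _) hx (hxy.trans (mul_le_mul_right hyt x))
  exact .inl (hrt.trans (hxt.ge.trans ((resl x _ y).2 le_rfl)))

theorem ld_one_comparable_of_one_le {x : A} (hx : 1 ≤ x) (y : A) :
    ld x 1 ≤ y ∨ y ≤ ld x 1 := by
  have hr : ld x 1 ≤ 1 := ld_one_le_one resl hx
  rcases conic y with hy | hy
  swap
  · exact .inl (hr.trans hy)
  rcases conic (x * y) with hxy | hxy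
  · exact .inr ((resl x y 1).1 hxy)
  have hxy_eq : x * y = x := mul_eq_left_of_one_le_mul (idem x) hy hxy
  have hxr : x * ld x 1 = ld x 1 :=
    mul_eq_right_of_mul_le_one (idem _) hx ((resl x _ 1).2 le_rfl)
  have hxyr : x * (y * ld x 1) = ld x 1 := by rw [← mul_assoc, hxy_eq, hxr]
  have hyr : x * (y * ld x 1) = y * ld x 1 :=
    mul_eq_right_of_mul_le_one (idem _) hx (hxyr.le.trans hr)
  refine .inl ?_
  calc ld x 1 = y * ld x 1 := hxyr.symm.trans hyr
    _ ≤ y := mul_le_of_le_one_right' hr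

theorem ld_one_comparable (x y : A) : ld x 1 ≤ y ∨ y ≤ ld x 1 :=
  (conic x).elim (ld_one_comparable_of_le_one resl conic idem · y)
    (ld_one_comparable_of_one_le resl conic idem · y)

end Residuated

/-- In a conic idempotent residuated lattice, `x^ℓ = 1/x` and `x^r = x\1` are conical
elements, and both have sign opposite to the sign of `x`. -/
theorem stmt1 {A : Type*} [Lattice A] [Monoid A]
    (ld rd : A → A → A)
    (resl : ∀ x y z : A, x * y ≤ z ↔ y ≤ ld x z)
    (resr : ∀ x y z : A, x * y ≤ z ↔ x ≤ rd z y)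
    (conic : ∀ a : A, a ≤ 1 ∨ 1 ≤ a)
    (idem : ∀ x : A, x * x = x) :
    ∀ x : A,
      (∀ y : A, rd 1 x ≤ y ∨ y ≤ rd 1 x) ∧
      (∀ y : A, ld x 1 ≤ y ∨ y ≤ ld x 1) ∧
      (x ≤ 1 → 1 ≤ rd 1 x ∧ 1 ≤ ld x 1) ∧
      (1 ≤ x → rd 1 x ≤ 1 ∧ ld x 1 ≤ 1) := by
  have := mulLeftMono_of_residual resl
  have := mulRightMono_of_residual resr
  have resl_op : ∀ x y z : Aᵐᵒᵖ, x * y ≤ z ↔ y ≤ op (rd z.unop x.unop) :=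
    fun x y z => resr y.unop x.unop z.unop
  have conic_op : ∀ a : Aᵐᵒᵖ, a ≤ 1 ∨ 1 ≤ a := fun a => conic a.unop
  have idem_op : ∀ a : Aᵐᵒᵖ, a * a = a := fun a => unop_injective (idem a.unop)
  intro x
  exact ⟨fun y => ld_one_comparable resl_op conic_op idem_op (op x) (op y),
    ld_one_comparable resl conic idem x,
    fun hx => ⟨one_le_ld_one resl_op (x := op x) hx, one_le_ld_one resl hx⟩,
    fun hx => ⟨ld_one_le_one resl_op (x := op x) hx, ld_one_le_one resl hx⟩⟩
end

section
/- In a conic idempotent residuated lattice, an element x is central (commutes with every element) if and only if x^ℓ = x^r. -/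
/-!
Residuation makes multiplication monotone, and `x^ℓ = x^r` says exactly that `y * x ≤ 1 ↔ x * y ≤ 1`
for every `y`. In an idempotent monotone monoid, two elements on the same side of `1` multiply as
their meet (below `1`) or join (above `1`). For `p ≤ 1 ≤ q`, idempotency forces `p * q` and `q * p`
into `{p, q}`: each product is `p` when it lies below `1` and `q` when it lies above. So they agree
as soon as they lie on the same side of `1`, which is what `x^ℓ = x^r` guarantees.
-/

section Residuated

variable {A : Type*} [PartialOrder A] [Monoid A]

theorem mulLeftMono_of_residuated (ld : A → A → A)
    (resl : ∀ x y z : A, x * y ≤ z ↔ y ≤ ld x z) : MulLeftMono A :=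
  ⟨fun a _ c h => (resl a _ (a * c)).2 (h.trans ((resl a c (a * c)).1 le_rfl))⟩

theorem mulRightMono_of_residuated (rd : A → A → A)
    (resr : ∀ x y z : A, x * y ≤ z ↔ x ≤ rd z y) : MulRightMono A :=
  ⟨fun a _ c h => (resr _ a (c * a)).2 (h.trans ((resr c a (c * a)).1 le_rfl))⟩

theorem rd_eq_ld_iff {ld rd : A → A → A}
    (resl : ∀ x y z : A, x * y ≤ z ↔ y ≤ ld x z)
    (resr : ∀ x y z : A, x * y ≤ z ↔ x ≤ rd z y) (x z : A) :
    rd z x = ld x z ↔ ∀ y, y * x ≤ z ↔ x * y ≤ z := by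
  constructor
  · intro h y
    rw [resr y x z, resl x y z, h]
  · intro h
    exact eq_of_forall_le_iff fun y => by rw [← resr, ← resl, h]

end Residuated

section IdempotentMonoid

variable {A : Type*} [Monoid A]

theorem mul_eq_inf_of_le_one [SemilatticeInf A] [MulLeftMono A] [MulRightMono A]
    (idem : ∀ x : A, x * x = x) {p q : A} (hp : p ≤ 1) (hq : q ≤ 1) : p * q = p ⊓ q := by
  refine le_antisymm (le_inf (mul_le_of_le_one_right' hq) (mul_le_of_le_one_left' hp)) ?_
  calc p ⊓ q = (p ⊓ q) * (p ⊓ q) := (idem _).symm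
    _ ≤ p * q := mul_le_mul' inf_le_left inf_le_right

theorem mul_eq_sup_of_one_le [SemilatticeSup A] [MulLeftMono A] [MulRightMono A]
    (idem : ∀ x : A, x * x = x) {p q : A} (hp : 1 ≤ p) (hq : 1 ≤ q) : p * q = p ⊔ q := by
  refine le_antisymm ?_ (sup_le (le_mul_of_one_le_right' hq) (le_mul_of_one_le_left' hp))
  calc p * q ≤ (p ⊔ q) * (p ⊔ q) := mul_le_mul' le_sup_left le_sup_right
    _ = p ⊔ q := idem _

variable [PartialOrder A]

theorem mul_eq_left_of_one_le_of_mul_le_one [MulLeftMono A] (idem : ∀ x : A, x * x = x)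
    {a b : A} (hb : 1 ≤ b) (hab : a * b ≤ 1) : a * b = a := by
  refine le_antisymm ?_ (le_mul_of_one_le_right' hb)
  calc a * b = a * (a * b) := by rw [← mul_assoc, idem]
    _ ≤ a := mul_le_of_le_one_right' hab

theorem mul_eq_right_of_one_le_of_mul_le_one [MulRightMono A] (idem : ∀ x : A, x * x = x)
    {a b : A} (ha : 1 ≤ a) (hab : a * b ≤ 1) : a * b = b := by
  refine le_antisymm ?_ (le_mul_of_one_le_left' ha)
  calc a * b = a * b * b := by rw [mul_assoc, idem]
    _ ≤ b := mul_le_of_le_one_left' hab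

theorem mul_eq_right_of_le_one_of_one_le_mul [MulRightMono A] (idem : ∀ x : A, x * x = x)
    {a b : A} (ha : a ≤ 1) (hab : 1 ≤ a * b) : a * b = b := by
  refine le_antisymm (mul_le_of_le_one_left' ha) ?_
  calc b ≤ a * b * b := le_mul_of_one_le_left' hab
    _ = a * b := by rw [mul_assoc, idem]

theorem mul_eq_left_of_le_one_of_one_le_mul [MulLeftMono A] (idem : ∀ x : A, x * x = x)
    {a b : A} (hb : b ≤ 1) (hab : 1 ≤ a * b) : a * b = a := by
  refine le_antisymm (mul_le_of_le_one_right' hb) ?_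
  calc a ≤ a * (a * b) := le_mul_of_one_le_right' hab
    _ = a * b := by rw [← mul_assoc, idem]

variable [MulLeftMono A] [MulRightMono A]

theorem commute_of_le_one_of_one_le (conic : ∀ a : A, a ≤ 1 ∨ 1 ≤ a)
    (idem : ∀ x : A, x * x = x) {p q : A} (hp : p ≤ 1) (hq : 1 ≤ q)
    (h : p * q ≤ 1 ↔ q * p ≤ 1) : Commute p q := by
  by_cases hpq : p * q ≤ 1
  · rw [Commute, SemiconjBy, mul_eq_left_of_one_le_of_mul_le_one idem hq hpq,
      mul_eq_right_of_one_le_of_mul_le_one idem hq (h.1 hpq)]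
  · have hqp : ¬q * p ≤ 1 := (not_congr h).1 hpq
    rw [Commute, SemiconjBy,
      mul_eq_right_of_le_one_of_one_le_mul idem hp ((conic _).resolve_left hpq),
      mul_eq_left_of_le_one_of_one_le_mul idem hp ((conic _).resolve_left hqp)]

end IdempotentMonoid

theorem commute_of_mul_le_one_iff {A : Type*} [Lattice A] [Monoid A] [MulLeftMono A]
    [MulRightMono A] (conic : ∀ a : A, a ≤ 1 ∨ 1 ≤ a) (idem : ∀ x : A, x * x = x) {x : A}
    (h : ∀ y, y * x ≤ 1 ↔ x * y ≤ 1) (y : A) : Commute x y := by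
  rcases conic x with hx | hx <;> rcases conic y with hy | hy
  · rw [Commute, SemiconjBy, mul_eq_inf_of_le_one idem hx hy, mul_eq_inf_of_le_one idem hy hx,
      inf_comm]
  · exact commute_of_le_one_of_one_le conic idem hx hy (h y).symm
  · exact (commute_of_le_one_of_one_le conic idem hy hx (h y)).symm
  · rw [Commute, SemiconjBy, mul_eq_sup_of_one_le idem hx hy, mul_eq_sup_of_one_le idem hy hx,
      sup_comm]

/-- In a conic idempotent residuated lattice, `x` is central iff `x^ℓ = x^r`. -/
theorem stmt2 {A : Type*} [Lattice A] [Monoid A]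
    (ld rd : A → A → A)
    (resl : ∀ x y z : A, x * y ≤ z ↔ y ≤ ld x z)
    (resr : ∀ x y z : A, x * y ≤ z ↔ x ≤ rd z y)
    (conic : ∀ a : A, a ≤ 1 ∨ 1 ≤ a)
    (idem : ∀ x : A, x * x = x) :
    ∀ x : A, (∀ y : A, x * y = y * x) ↔ rd 1 x = ld x 1 := by
  have := mulLeftMono_of_residuated ld resl
  have := mulRightMono_of_residuated rd resr
  intro x
  rw [rd_eq_ld_iff resl resr]
  constructor
  · intro hx y
    rw [hx y]
  · exact commute_of_mul_le_one_iff conic idem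
end

section
/- In a conic idempotent residuated lattice, for every element x, there is no element strictly between x^ℓ and x^r; that is, x^ℓ ∧ x^r and x^ℓ ∨ x^r form a covering pair whenever x^ℓ ≠ x^r. -/
/-!
Write `a = x^ℓ` and `b = x^r`. By conicity `c * x` is comparable to `1`, which forces `c ≤ a`
or `b ≤ c`; symmetrically `c ≤ b` or `a ≤ c`. So nothing lies strictly between `a` and `b` once
they are comparable. In an idempotent ordered monoid a product of two elements on the same side
of `1` is their join or meet, so `a` and `b`, which lie on the same side of `1`, commute. Now
`a ≤ b ↔ x * a ≤ 1` and `b ≤ a ↔ b * x ≤ 1`; if both failed, conicity would give `1 ≤ x * a` and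
`1 ≤ b * x`, hence `x * a ≤ (x * a) * (b * x) = (x * b) * (a * x) ≤ 1`, a contradiction.
-/

universe u

def IsLeftResidual {A : Type u} [Mul A] [LE A] (ld : A → A → A) : Prop :=
  ∀ x y z : A, x * y ≤ z ↔ y ≤ ld x z

def IsRightResidual {A : Type u} [Mul A] [LE A] (rd : A → A → A) : Prop :=
  ∀ x y z : A, x * y ≤ z ↔ x ≤ rd z y

def IsConic (A : Type u) [LE A] [One A] : Prop :=
  ∀ a : A, a ≤ 1 ∨ 1 ≤ a

section OrderedMonoid

variable {A : Type u} [Lattice A] [MulOneClass A] [MulLeftMono A] [MulRightMono A] {p q : A}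

theorem mul_eq_sup_of_one_le_s4 (hp : 1 ≤ p) (hq : 1 ≤ q) (h : IsIdempotentElem (p ⊔ q)) :
    p * q = p ⊔ q :=
  le_antisymm (h ▸ mul_le_mul' le_sup_left le_sup_right)
    (sup_le (le_mul_of_one_le_right' hq) (le_mul_of_one_le_left' hp))

theorem mul_eq_inf_of_le_one_s4 (hp : p ≤ 1) (hq : q ≤ 1) (h : IsIdempotentElem (p ⊓ q)) :
    p * q = p ⊓ q :=
  le_antisymm (le_inf (mul_le_of_le_one_right' hq) (mul_le_of_le_one_left' hp))
    (h ▸ mul_le_mul' inf_le_left inf_le_right)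

theorem commute_of_one_le (hp : 1 ≤ p) (hq : 1 ≤ q) (h : IsIdempotentElem (p ⊔ q)) :
    Commute p q := by
  rw [Commute, SemiconjBy, mul_eq_sup_of_one_le_s4 hp hq h,
    mul_eq_sup_of_one_le_s4 hq hp (sup_comm p q ▸ h), sup_comm]

theorem commute_of_le_one (hp : p ≤ 1) (hq : q ≤ 1) (h : IsIdempotentElem (p ⊓ q)) :
    Commute p q := by
  rw [Commute, SemiconjBy, mul_eq_inf_of_le_one_s4 hp hq h,
    mul_eq_inf_of_le_one_s4 hq hp (inf_comm p q ▸ h), inf_comm]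

end OrderedMonoid

section Residuated

variable {A : Type u} [Lattice A] [Monoid A] {ld rd : A → A → A}

theorem IsLeftResidual.mulLeftMono (hl : IsLeftResidual ld) : MulLeftMono A :=
  ⟨fun x _ z hyz => (hl x _ (x * z)).2 (hyz.trans ((hl x z _).1 le_rfl))⟩

theorem IsRightResidual.mulRightMono (hr : IsRightResidual rd) : MulRightMono A :=
  ⟨fun y _ z hxz => (hr _ y (z * y)).2 (hxz.trans ((hr z y _).1 le_rfl))⟩

theorem IsLeftResidual.one_le_of_le_one (hl : IsLeftResidual ld) {x : A} (hx : x ≤ 1) :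
    1 ≤ ld x 1 :=
  (hl x 1 1).1 ((mul_one x).symm ▸ hx)

theorem IsRightResidual.one_le_of_le_one (hr : IsRightResidual rd) {x : A} (hx : x ≤ 1) :
    1 ≤ rd 1 x :=
  (hr 1 x 1).1 ((one_mul x).symm ▸ hx)

theorem IsLeftResidual.le_one_of_one_le [MulRightMono A] (hl : IsLeftResidual ld) {x : A}
    (hx : 1 ≤ x) : ld x 1 ≤ 1 :=
  (le_mul_of_one_le_left' hx).trans ((hl x _ 1).2 le_rfl)

theorem IsRightResidual.le_one_of_one_le [MulLeftMono A] (hr : IsRightResidual rd) {x : A}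
    (hx : 1 ≤ x) : rd 1 x ≤ 1 :=
  (le_mul_of_one_le_right' hx).trans ((hr _ x 1).2 le_rfl)

theorem commute_rd_one_ld_one (hl : IsLeftResidual ld) (hr : IsRightResidual rd)
    (conic : IsConic A) (idem : ∀ x : A, IsIdempotentElem x) (x : A) :
    Commute (rd 1 x) (ld x 1) := by
  have := hl.mulLeftMono
  have := hr.mulRightMono
  rcases conic x with hx | hx
  · exact commute_of_one_le (hr.one_le_of_le_one hx) (hl.one_le_of_le_one hx) (idem _)
  · exact commute_of_le_one (hr.le_one_of_one_le hx) (hl.le_one_of_one_le hx) (idem _)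

theorem le_rd_one_or_ld_one_le (hl : IsLeftResidual ld) (hr : IsRightResidual rd)
    (conic : IsConic A) (x c : A) : c ≤ rd 1 x ∨ ld x 1 ≤ c := by
  have := hl.mulLeftMono
  have := hr.mulRightMono
  refine (conic (c * x)).imp (hr c x 1).1 fun h => ?_
  calc ld x 1 ≤ c * x * ld x 1 := le_mul_of_one_le_left' h
    _ = c * (x * ld x 1) := mul_assoc c x _
    _ ≤ c := mul_le_of_le_one_right' ((hl x _ 1).2 le_rfl)

theorem le_ld_one_or_rd_one_le (hl : IsLeftResidual ld) (hr : IsRightResidual rd)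
    (conic : IsConic A) (x c : A) : c ≤ ld x 1 ∨ rd 1 x ≤ c := by
  have := hl.mulLeftMono
  have := hr.mulRightMono
  refine (conic (x * c)).imp (hl x c 1).1 fun h => ?_
  calc rd 1 x ≤ rd 1 x * (x * c) := le_mul_of_one_le_right' h
    _ = rd 1 x * x * c := (mul_assoc _ x c).symm
    _ ≤ c := mul_le_of_le_one_left' ((hr _ x 1).2 le_rfl)

theorem rd_one_le_ld_one_or_ld_one_le_rd_one (hl : IsLeftResidual ld) (hr : IsRightResidual rd)
    (conic : IsConic A) (idem : ∀ x : A, IsIdempotentElem x) (x : A) :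
    rd 1 x ≤ ld x 1 ∨ ld x 1 ≤ rd 1 x := by
  have := hl.mulLeftMono
  have := hr.mulRightMono
  set a := rd 1 x
  set b := ld x 1
  have hax : a * x ≤ 1 := (hr a x 1).2 le_rfl
  have hxb : x * b ≤ 1 := (hl x b 1).2 le_rfl
  rw [← hl x a 1, ← hr b x 1]
  rcases conic (x * a) with hxa | hxa
  · exact .inl hxa
  rcases conic (b * x) with hbx | hbx
  · exact .inr hbx
  left
  calc x * a ≤ x * a * (b * x) := le_mul_of_one_le_right' hbx
    _ = x * b * (a * x) := by
      rw [mul_assoc, ← mul_assoc a, commute_rd_one_ld_one hl hr conic idem x, mul_assoc,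
        ← mul_assoc]
    _ ≤ 1 := mul_le_one' hxb hax

/-- In a conic idempotent residuated lattice there is no element strictly between
`x^ℓ` and `x^r`. -/
theorem stmt4 {A : Type*} [Lattice A] [Monoid A]
    (ld rd : A → A → A)
    (resl : ∀ x y z : A, x * y ≤ z ↔ y ≤ ld x z)
    (resr : ∀ x y z : A, x * y ≤ z ↔ x ≤ rd z y)
    (conic : ∀ a : A, a ≤ 1 ∨ 1 ≤ a)
    (idem : ∀ x : A, x * x = x) :
    ∀ x c : A, ¬ (rd 1 x ⊓ ld x 1 < c ∧ c < rd 1 x ⊔ ld x 1) := by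
  rintro x c ⟨hlt, hgt⟩
  rcases rd_one_le_ld_one_or_ld_one_le_rd_one resl resr conic idem x with hab | hba
  · rw [inf_eq_left.2 hab] at hlt
    rw [sup_eq_right.2 hab] at hgt
    exact (le_rd_one_or_ld_one_le resl resr conic x c).elim hlt.not_ge hgt.not_ge
  · rw [inf_eq_right.2 hba] at hlt
    rw [sup_eq_left.2 hba] at hgt
    exact (le_ld_one_or_rd_one_le resl resr conic x c).elim hlt.not_ge hgt.not_ge
end Residuated
end

section
/- Let C = (C, ∧, ∨, ℓ, r, 1) be an idempotent Galois connection, with multiplication x·y = x ∧ y if x ≤ y^ℓ and x·y = x ∨ y if y^ℓ < x, and division x\y = x^r ∨ y if x ≤ y and x\y = x^r ∧ y if y < x. Then the residuation law holds: for all x, y, z, x·y ≤ z if and only if y ≤ x\z. -/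
/-!
The antitone Galois connection turns the case condition `x ≤ y^ℓ` of the product into
`y ≤ x^r`. Once both operations are written as case distinctions on `y ≤ x^r` and on `x ≤ z`,
the residuation law is a fact about four elements `x^r, x, y, z` of a chain.
-/

theorem antitone_of_map_sup_eq_inf {α β : Type*} [SemilatticeSup α] [SemilatticeInf β]
    {f : α → β} (h : ∀ x y, f (x ⊔ y) = f x ⊓ f y) : Antitone f := fun a b hab =>
  calc f b = f (a ⊔ b) := by rw [sup_eq_right.2 hab]
    _ = f a ⊓ f b := h a b
    _ ≤ f a := inf_le_left

theorem le_apply_iff_le_apply_of_antitone {α : Type*} [Preorder α] {l r : α → α}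
    (hl : Antitone l) (hr : Antitone r) (hrl : ∀ x, x ≤ r (l x)) (hlr : ∀ x, x ≤ l (r x))
    {a b : α} : a ≤ l b ↔ b ≤ r a :=
  ⟨fun h => (hrl b).trans (hr h), fun h => (hlr a).trans (hl h)⟩

theorem ite_inf_sup_le_iff_le_ite_sup_inf {α : Type*} [LinearOrder α] {c x y z : α} :
    (if y ≤ c then x ⊓ y else x ⊔ y) ≤ z ↔ y ≤ (if x ≤ z then c ⊔ z else c ⊓ z) := by
  split_ifs with hyc hxz hxz
  · exact iff_of_true (inf_le_left.trans hxz) (le_sup_of_le_left hyc)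
  · rw [inf_le_iff, le_inf_iff]
    exact ⟨fun h => ⟨hyc, h.resolve_left hxz⟩, fun h => Or.inr h.2⟩
  · rw [sup_le_iff, le_sup_iff]
    exact ⟨fun h => Or.inr h.2, fun h => ⟨hxz, h.resolve_left hyc⟩⟩
  · exact iff_of_false (fun h => hxz (le_sup_left.trans h)) (fun h => hyc (h.trans inf_le_left))

theorem stmt9_general {A : Type*} [LinearOrder A]
    (l r : A → A)
    (gal1 : ∀ x : A, x ≤ r (l x)) (gal2 : ∀ x : A, x ≤ l (r x))
    (lsup : ∀ x y : A, l (x ⊔ y) = l x ⊓ l y)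
    (rsup : ∀ x y : A, r (x ⊔ y) = r x ⊓ r y)
    (m : A → A → A)
    (mdef : ∀ x y : A, (x ≤ l y → m x y = x ⊓ y) ∧ (l y < x → m x y = x ⊔ y))
    (d : A → A → A)
    (ddef : ∀ x y : A, (x ≤ y → d x y = r x ⊔ y) ∧ (y < x → d x y = r x ⊓ y)) :
    ∀ x y z : A, m x y ≤ z ↔ y ≤ d x z := by
  intro x y z
  have galois : x ≤ l y ↔ y ≤ r x :=
    le_apply_iff_le_apply_of_antitone (antitone_of_map_sup_eq_inf lsup)
      (antitone_of_map_sup_eq_inf rsup) gal1 gal2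
  have hm : m x y = if y ≤ r x then x ⊓ y else x ⊔ y := by
    split_ifs with h
    · exact (mdef x y).1 (galois.2 h)
    · exact (mdef x y).2 (lt_of_not_ge (mt galois.1 h))
  have hd : d x z = if x ≤ z then r x ⊔ z else r x ⊓ z := by
    split_ifs with h
    · exact (ddef x z).1 h
    · exact (ddef x z).2 (lt_of_not_ge h)
  rw [hm, hd]
  exact ite_inf_sup_le_iff_le_ite_sup_inf

/-- In an idempotent Galois connection, with multiplication
`x·y = x ∧ y` if `x ≤ y^ℓ`, `x·y = x ∨ y` if `y^ℓ < x`, and division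
`x\y = x^r ∨ y` if `x ≤ y`, `x\y = x^r ∧ y` if `y < x`, the residuation
law `x·y ≤ z ↔ y ≤ x\z` holds. -/
theorem stmt9 {A : Type*} [LinearOrder A] [One A]
    (l r : A → A)
    (l1 : l 1 = 1) (r1 : r 1 = 1)
    (gal1 : ∀ x : A, x ≤ r (l x)) (gal2 : ∀ x : A, x ≤ l (r x))
    (lsup : ∀ x y : A, l (x ⊔ y) = l x ⊓ l y)
    (rsup : ∀ x y : A, r (x ⊔ y) = r x ⊓ r y)
    (lrl : ∀ x : A, l (r (l x)) = l x)
    (rlr : ∀ x : A, r (l (r x)) = r x)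
    (split : ∀ x y : A, y ≤ r x ⊓ l x ∨ r x ⊔ l x ≤ y)
    (m : A → A → A)
    (mdef : ∀ x y : A, (x ≤ l y → m x y = x ⊓ y) ∧ (l y < x → m x y = x ⊔ y))
    (d : A → A → A)
    (ddef : ∀ x y : A, (x ≤ y → d x y = r x ⊔ y) ∧ (y < x → d x y = r x ⊓ y)) :
    ∀ x y z : A, m x y ≤ z ↔ y ≤ d x z :=
  stmt9_general l r gal1 gal2 lsup rsup m mdef d ddef
end

section
/- In an idempotent residuated chain, with monoidal preorder x ⊑ y defined by x·y = x: if x, y ≤ 1, then x ⊑ y and not y ⊑ x holds if and only if x < y; and if x, y ≥ 1, then x ⊑ y and not y ⊑ x holds if and only if y < x. -/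
/-!
Both multiplications are monotone, being left adjoints of the residuals. Hence, below `1`,
idempotence squeezes `a = a * a ≤ a * b ≤ a * 1 = a` for `a ≤ b`, so the product of two
negative elements is their minimum; dually, the product of two positive elements is their maximum.
-/

section IdempotentOrderedMonoid

variable {A : Type*} [Monoid A] [PartialOrder A]

theorem mul_eq_left_of_le_of_le_one [MulLeftMono A] (idem : ∀ x : A, x * x = x) {a b : A}
    (hab : a ≤ b) (hb : b ≤ 1) : a * b = a :=
  le_antisymm (mul_le_of_le_one_right' hb) ((idem a).ge.trans (mul_le_mul_right hab a))

theorem mul_eq_right_of_le_of_le_one [MulRightMono A] (idem : ∀ x : A, x * x = x) {a b : A}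
    (hab : a ≤ b) (hb : b ≤ 1) : b * a = a :=
  le_antisymm (mul_le_of_le_one_left' hb) ((idem a).ge.trans (mul_le_mul_left hab a))

theorem mul_eq_right_of_one_le_of_le [MulRightMono A] (idem : ∀ x : A, x * x = x) {a b : A}
    (ha : 1 ≤ a) (hab : a ≤ b) : a * b = b :=
  le_antisymm ((mul_le_mul_left hab b).trans (idem b).le) (le_mul_of_one_le_left' ha)

theorem mul_eq_left_of_one_le_of_le [MulLeftMono A] (idem : ∀ x : A, x * x = x) {a b : A}
    (ha : 1 ≤ a) (hab : a ≤ b) : b * a = b :=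
  le_antisymm ((mul_le_mul_right hab b).trans (idem b).le) (le_mul_of_one_le_right' ha)

end IdempotentOrderedMonoid

section IdempotentOrderedMonoidChain

variable {A : Type*} [Monoid A] [LinearOrder A] [MulLeftMono A] [MulRightMono A]

theorem mul_eq_left_and_not_mul_eq_right_iff_lt_of_le_one (idem : ∀ x : A, x * x = x)
    {x y : A} (hx : x ≤ 1) (hy : y ≤ 1) : (x * y = x ∧ ¬ y * x = y) ↔ x < y := by
  constructor
  · rintro ⟨-, hyx⟩
    exact lt_of_not_ge fun hyx' => hyx (mul_eq_left_of_le_of_le_one idem hyx' hx)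
  · intro hxy
    refine ⟨mul_eq_left_of_le_of_le_one idem hxy.le hy, fun hyx => hxy.ne ?_⟩
    rw [← hyx, mul_eq_right_of_le_of_le_one idem hxy.le hy]

theorem mul_eq_left_and_not_mul_eq_right_iff_lt_of_one_le (idem : ∀ x : A, x * x = x)
    {x y : A} (hx : 1 ≤ x) (hy : 1 ≤ y) : (x * y = x ∧ ¬ y * x = y) ↔ y < x := by
  constructor
  · rintro ⟨-, hyx⟩
    exact lt_of_not_ge fun hxy => hyx (mul_eq_left_of_one_le_of_le idem hx hxy)
  · intro hyx
    refine ⟨mul_eq_left_of_one_le_of_le idem hy hyx.le, fun hxy => hyx.ne' ?_⟩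
    rw [← hxy, mul_eq_right_of_one_le_of_le idem hy hyx.le]

end IdempotentOrderedMonoidChain

/-- In an idempotent residuated chain: for negative `x, y`, `x ⊏ y` iff `x < y`;
for positive `x, y`, `x ⊏ y` iff `y < x` (where `x ⊏ y` means `x*y = x` and
`y*x ≠ y`). -/
theorem stmt11 {A : Type*} [LinearOrder A] [Monoid A]
    (ld rd : A → A → A)
    (resl : ∀ x y z : A, x * y ≤ z ↔ y ≤ ld x z)
    (resr : ∀ x y z : A, x * y ≤ z ↔ x ≤ rd z y)
    (idem : ∀ x : A, x * x = x) :
    ∀ x y : A,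
      (x ≤ 1 → y ≤ 1 → ((x * y = x ∧ ¬ y * x = y) ↔ x < y)) ∧
      (1 ≤ x → 1 ≤ y → ((x * y = x ∧ ¬ y * x = y) ↔ y < x)) := by
  have : MulLeftMono A := ⟨fun x _ _ h =>
    GaloisConnection.monotone_l (l := (x * ·)) (fun y z => resl x y z) h⟩
  have : MulRightMono A := ⟨fun y _ _ h =>
    GaloisConnection.monotone_l (l := (· * y)) (fun x z => resr x y z) h⟩
  intro x y
  exact ⟨mul_eq_left_and_not_mul_eq_right_iff_lt_of_le_one idem,
    mul_eq_left_and_not_mul_eq_right_iff_lt_of_one_le idem⟩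
end

section
/- In an idempotent residuated chain, for any element x we have {x^ℓ, x^r} = {x^⋆, x^*}, where x^⋆ = x^ℓ ∧ x^r and x^* = x^ℓ ∨ x^r; moreover, if x is central then x^ℓ = x^r = x^⋆ = x^*. -/
theorem Set.pair_eq_inf_sup {α : Type*} [LinearOrder α] (a b : α) :
    ({a, b} : Set α) = {a ⊓ b, a ⊔ b} := by
  rcases le_total a b with h | h
  · rw [inf_eq_left.mpr h, sup_eq_right.mpr h]
  · rw [inf_eq_right.mpr h, sup_eq_left.mpr h, Set.pair_comm]

theorem rd_eq_ld_of_central {A : Type*} [PartialOrder A] [Monoid A]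
    (ld rd : A → A → A)
    (resl : ∀ x y z : A, x * y ≤ z ↔ y ≤ ld x z)
    (resr : ∀ x y z : A, x * y ≤ z ↔ x ≤ rd z y)
    {x : A} (hx : ∀ y : A, x * y = y * x) (z : A) :
    rd z x = ld x z := by
  apply le_antisymm
  · rw [← resl, hx, resr]
  · rw [← resr, ← hx, resl]

theorem stmt14_general {A : Type*} [LinearOrder A] [Monoid A]
    (ld rd : A → A → A)
    (resl : ∀ x y z : A, x * y ≤ z ↔ y ≤ ld x z)
    (resr : ∀ x y z : A, x * y ≤ z ↔ x ≤ rd z y) :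
    ∀ x : A,
      ({rd 1 x, ld x 1} : Set A) = {rd 1 x ⊓ ld x 1, rd 1 x ⊔ ld x 1} ∧
      ((∀ y : A, x * y = y * x) →
        rd 1 x = ld x 1 ∧ ld x 1 = rd 1 x ⊓ ld x 1 ∧
          rd 1 x ⊓ ld x 1 = rd 1 x ⊔ ld x 1) := by
  intro x
  refine ⟨Set.pair_eq_inf_sup _ _, fun hx => ?_⟩
  rw [rd_eq_ld_of_central ld rd resl resr hx 1, inf_idem, sup_idem]
  exact ⟨rfl, rfl, rfl⟩

/-- In an idempotent residuated chain, `{x^ℓ, x^r} = {x^⋆, x^*}`; moreover for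
central `x` all four coincide. -/
theorem stmt14 {A : Type*} [LinearOrder A] [Monoid A]
    (ld rd : A → A → A)
    (resl : ∀ x y z : A, x * y ≤ z ↔ y ≤ ld x z)
    (resr : ∀ x y z : A, x * y ≤ z ↔ x ≤ rd z y)
    (idem : ∀ x : A, x * x = x) :
    ∀ x : A,
      ({rd 1 x, ld x 1} : Set A) = {rd 1 x ⊓ ld x 1, rd 1 x ⊔ ld x 1} ∧
      ((∀ y : A, x * y = y * x) →
        rd 1 x = ld x 1 ∧ ld x 1 = rd 1 x ⊓ ld x 1 ∧
          rd 1 x ⊓ ld x 1 = rd 1 x ⊔ ld x 1) :=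
  stmt14_general ld rd resl resr
end

section
/- Every ⋆-involutive idempotent residuated chain is quasi-involutive: if an idempotent residuated chain satisfies x^{⋆⋆} = x for all x (where x^⋆ = x^ℓ ∧ x^r), then it also satisfies x^{ℓr} ∧ x^{rℓ} = x for all x. -/
/-!
Both double negations `x^{ℓr}` and `x^{rℓ}` lie above `x`. Since `x^⋆` lies below `x^ℓ` and `x^r`,
antitonicity of the negations gives `x^{ℓr} ≤ (x^⋆)^r` and `x^{rℓ} ≤ (x^⋆)^ℓ`, so
`x ≤ x^{ℓr} ∧ x^{rℓ} ≤ x^{⋆⋆} = x`.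
-/

/-- `x^⋆ = x^ℓ ∧ x^r`. -/
def lstar {A : Type*} [Lattice A] [One A] (ld rd : A → A → A) (x : A) : A :=
  rd 1 x ⊓ ld x 1

section Residuated

variable {A : Type*} [Monoid A] {ld rd : A → A → A}

section Preorder

variable [Preorder A]

theorem le_ld_rd_one (resl : ∀ x y z : A, x * y ≤ z ↔ y ≤ ld x z)
    (resr : ∀ x y z : A, x * y ≤ z ↔ x ≤ rd z y) (x : A) : x ≤ ld (rd 1 x) 1 :=
  (resl _ _ _).mp ((resr _ _ _).mpr le_rfl)

theorem le_rd_ld_one (resl : ∀ x y z : A, x * y ≤ z ↔ y ≤ ld x z)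
    (resr : ∀ x y z : A, x * y ≤ z ↔ x ≤ rd z y) (x : A) : x ≤ rd 1 (ld x 1) :=
  (resr _ _ _).mp ((resl _ _ _).mpr le_rfl)

theorem rd_one_antitone (resl : ∀ x y z : A, x * y ≤ z ↔ y ≤ ld x z)
    (resr : ∀ x y z : A, x * y ≤ z ↔ x ≤ rd z y) : Antitone (rd 1) := fun _ b hab =>
  (resr _ _ _).mp ((resl _ _ _).mpr (hab.trans (le_ld_rd_one resl resr b)))

theorem ld_one_antitone (resl : ∀ x y z : A, x * y ≤ z ↔ y ≤ ld x z)
    (resr : ∀ x y z : A, x * y ≤ z ↔ x ≤ rd z y) : Antitone (ld · 1) := fun _ b hab =>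
  (resl _ _ _).mp ((resr _ _ _).mpr (hab.trans (le_rd_ld_one resl resr b)))

end Preorder

theorem ld_rd_one_inf_rd_ld_one_le_lstar_lstar [Lattice A]
    (resl : ∀ x y z : A, x * y ≤ z ↔ y ≤ ld x z)
    (resr : ∀ x y z : A, x * y ≤ z ↔ x ≤ rd z y) (x : A) :
    ld (rd 1 x) 1 ⊓ rd 1 (ld x 1) ≤ lstar ld rd (lstar ld rd x) :=
  le_inf (inf_le_right.trans (rd_one_antitone resl resr inf_le_right))
    (inf_le_left.trans (ld_one_antitone resl resr inf_le_left))

end Residuated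

theorem stmt16_general {A : Type*} [LinearOrder A] [Monoid A]
    (ld rd : A → A → A)
    (resl : ∀ x y z : A, x * y ≤ z ↔ y ≤ ld x z)
    (resr : ∀ x y z : A, x * y ≤ z ↔ x ≤ rd z y)
    (starinv : ∀ x : A, lstar ld rd (lstar ld rd x) = x) :
    ∀ x : A, ld (rd 1 x) 1 ⊓ rd 1 (ld x 1) = x := fun x =>
  le_antisymm ((ld_rd_one_inf_rd_ld_one_le_lstar_lstar resl resr x).trans_eq (starinv x))
    (le_inf (le_ld_rd_one resl resr x) (le_rd_ld_one resl resr x))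

/-- Every ⋆-involutive idempotent residuated chain is quasi-involutive:
`x^{⋆⋆} = x` for all `x` implies `x^{ℓr} ∧ x^{rℓ} = x` for all `x`. -/
theorem stmt16 {A : Type*} [LinearOrder A] [Monoid A]
    (ld rd : A → A → A)
    (resl : ∀ x y z : A, x * y ≤ z ↔ y ≤ ld x z)
    (resr : ∀ x y z : A, x * y ≤ z ↔ x ≤ rd z y)
    (idem : ∀ x : A, x * x = x)
    (starinv : ∀ x : A, lstar ld rd (lstar ld rd x) = x) :
    ∀ x : A, ld (rd 1 x) 1 ⊓ rd 1 (ld x 1) = x :=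
  stmt16_general ld rd resl resr starinv
end

section
/- In a ⋆-involutive idempotent residuated chain (one satisfying x^{⋆⋆} = x, with x^⋆ = x^ℓ ∧ x^r), the identity element 1 is isolated: for every x ≠ 1, x^ℓ ≠ 1 and x^r ≠ 1. -/
section Residuation

variable {A : Type*} [MulOneClass A] {ld rd : A → A → A}

theorem one_le_rd_one_iff [Preorder A] (resr : ∀ x y z : A, x * y ≤ z ↔ x ≤ rd z y) {x : A} :
    1 ≤ rd 1 x ↔ x ≤ 1 := by
  rw [← resr, one_mul]

theorem one_le_ld_one_iff [Preorder A] (resl : ∀ x y z : A, x * y ≤ z ↔ y ≤ ld x z) {x : A} :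
    1 ≤ ld x 1 ↔ x ≤ 1 := by
  rw [← resl, mul_one]

theorem rd_one_one [PartialOrder A] (resr : ∀ x y z : A, x * y ≤ z ↔ x ≤ rd z y) :
    rd 1 1 = 1 :=
  le_antisymm (by simpa using (resr (rd 1 1) 1 1).2 le_rfl) ((one_le_rd_one_iff resr).2 le_rfl)

theorem ld_one_one [PartialOrder A] (resl : ∀ x y z : A, x * y ≤ z ↔ y ≤ ld x z) :
    ld 1 1 = 1 :=
  le_antisymm (by simpa using (resl 1 (ld 1 1) 1).2 le_rfl) ((one_le_ld_one_iff resl).2 le_rfl)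

variable [Lattice A] (resl : ∀ x y z : A, x * y ≤ z ↔ y ≤ ld x z)
  (resr : ∀ x y z : A, x * y ≤ z ↔ x ≤ rd z y)
include resl resr

theorem lstar_one : lstar ld rd 1 = 1 := by
  simp [lstar, rd_one_one resr, ld_one_one resl]

theorem lstar_eq_one_of_rd_one_eq_one {x : A} (h : rd 1 x = 1) : lstar ld rd x = 1 := by
  rw [lstar, h, inf_eq_left]
  exact (one_le_ld_one_iff resl).2 ((one_le_rd_one_iff resr).1 h.ge)

theorem lstar_eq_one_of_ld_one_eq_one {x : A} (h : ld x 1 = 1) : lstar ld rd x = 1 := by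
  rw [lstar, h, inf_eq_right]
  exact (one_le_rd_one_iff resr).2 ((one_le_ld_one_iff resl).1 h.ge)

theorem eq_one_of_lstar_eq_one (starinv : ∀ x : A, lstar ld rd (lstar ld rd x) = x) {x : A}
    (h : lstar ld rd x = 1) : x = 1 := by
  rw [← starinv x, h, lstar_one resl resr]

end Residuation

theorem stmt17_general {A : Type*} [LinearOrder A] [Monoid A]
    (ld rd : A → A → A)
    (resl : ∀ x y z : A, x * y ≤ z ↔ y ≤ ld x z)
    (resr : ∀ x y z : A, x * y ≤ z ↔ x ≤ rd z y)
    (starinv : ∀ x : A, lstar ld rd (lstar ld rd x) = x) :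
    ∀ x : A, x ≠ 1 → rd 1 x ≠ 1 ∧ ld x 1 ≠ 1 := by
  intro x hx
  exact ⟨fun h => hx (eq_one_of_lstar_eq_one resl resr starinv
      (lstar_eq_one_of_rd_one_eq_one resl resr h)),
    fun h => hx (eq_one_of_lstar_eq_one resl resr starinv
      (lstar_eq_one_of_ld_one_eq_one resl resr h))⟩

/-- In a ⋆-involutive idempotent residuated chain, `1` is isolated: for `x ≠ 1`,
`x^ℓ ≠ 1` and `x^r ≠ 1`. -/
theorem stmt17 {A : Type*} [LinearOrder A] [Monoid A]
    (ld rd : A → A → A)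
    (resl : ∀ x y z : A, x * y ≤ z ↔ y ≤ ld x z)
    (resr : ∀ x y z : A, x * y ≤ z ↔ x ≤ rd z y)
    (idem : ∀ x : A, x * x = x)
    (starinv : ∀ x : A, lstar ld rd (lstar ld rd x) = x) :
    ∀ x : A, x ≠ 1 → rd 1 x ≠ 1 ∧ ld x 1 ≠ 1 :=
  stmt17_general ld rd resl resr starinv
end

section
/- Let (A, B, C, f_B, f_C) be a V-formation of residuated lattices, where B is subdirectly irreducible and the image of A in B is (the subalgebra corresponding to) the monolith of B. Then every residuated lattice D that is a 1-amalgam of this V-formation (i.e., there are a homomorphism g_B : B → D and an embedding g_C : C → D with g_B ∘ f_B = g_C ∘ f_C) is in fact an amalgam: g_B is also injective. -/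
/-- A homomorphism of residuated lattices: preserves meet, join, product, unit and
both divisions. -/
def IsRLHom {A B : Type*} [Lattice A] [Lattice B] [Mul A] [Mul B] [One A] [One B]
    (lda rda : A → A → A) (ldb rdb : B → B → B) (f : A → B) : Prop :=
  (∀ x y : A, f (x ⊓ y) = f x ⊓ f y) ∧
  (∀ x y : A, f (x ⊔ y) = f x ⊔ f y) ∧
  (∀ x y : A, f (x * y) = f x * f y) ∧
  f 1 = 1 ∧
  (∀ x y : A, f (lda x y) = ldb (f x) (f y)) ∧
  (∀ x y : A, f (rda x y) = rdb (f x) (f y))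

/-- A congruence of a residuated lattice: an equivalence relation compatible with
all the operations. -/
def IsRLCong {B : Type*} [Lattice B] [Mul B]
    (ld rd : B → B → B) (θ : B → B → Prop) : Prop :=
  Equivalence θ ∧
  (∀ a b c d : B, θ a b → θ c d → θ (a * c) (b * d)) ∧
  (∀ a b c d : B, θ a b → θ c d → θ (a ⊓ c) (b ⊓ d)) ∧
  (∀ a b c d : B, θ a b → θ c d → θ (a ⊔ c) (b ⊔ d)) ∧
  (∀ a b c d : B, θ a b → θ c d → θ (ld a c) (ld b d)) ∧
  (∀ a b c d : B, θ a b → θ c d → θ (rd a c) (rd b d))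

/-- If `(A, B, C, f_B, f_C)` is a V-formation of residuated lattices and `B` is
subdirectly irreducible with monolith (corresponding to) the image of `A`, then
every residuated lattice that is a 1-amalgam of the V-formation is an amalgam:
the homomorphism `g_B` is injective. -/
theorem stmt18
    {A B C D : Type*}
    [Lattice A] [Monoid A] [Lattice B] [Monoid B]
    [Lattice C] [Monoid C] [Lattice D] [Monoid D]
    (lda rda : A → A → A) (ldb rdb : B → B → B)
    (ldc rdc : C → C → C) (ldd rdd : D → D → D)
    (reslA : ∀ x y z : A, x * y ≤ z ↔ y ≤ lda x z)
    (resrA : ∀ x y z : A, x * y ≤ z ↔ x ≤ rda z y)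
    (reslB : ∀ x y z : B, x * y ≤ z ↔ y ≤ ldb x z)
    (resrB : ∀ x y z : B, x * y ≤ z ↔ x ≤ rdb z y)
    (reslC : ∀ x y z : C, x * y ≤ z ↔ y ≤ ldc x z)
    (resrC : ∀ x y z : C, x * y ≤ z ↔ x ≤ rdc z y)
    (reslD : ∀ x y z : D, x * y ≤ z ↔ y ≤ ldd x z)
    (resrD : ∀ x y z : D, x * y ≤ z ↔ x ≤ rdd z y)
    (fB : A → B) (fC : A → C)
    (hfB : IsRLHom lda rda ldb rdb fB) (hfBinj : Function.Injective fB)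
    (hfC : IsRLHom lda rda ldc rdc fC) (hfCinj : Function.Injective fC)
    -- `B` is subdirectly irreducible and its monolith corresponds to `fB[A]`:
    -- the monolith is nontrivial and every nontrivial congruence of `B`
    -- collapses all of `fB[A]` to `1`.
    (hmono_nontriv : ∃ a : A, fB a ≠ (1 : B))
    (hmono : ∀ θ : B → B → Prop, IsRLCong ldb rdb θ →
      (∃ x y : B, θ x y ∧ x ≠ y) → ∀ a : A, θ (fB a) 1)
    (gB : B → D) (gC : C → D)
    (hgB : IsRLHom ldb rdb ldd rdd gB)
    (hgC : IsRLHom ldc rdc ldd rdd gC) (hgCinj : Function.Injective gC)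
    (comm : ∀ a : A, gB (fB a) = gC (fC a)) :
    Function.Injective gB := by
  obtain ⟨h1, h2, h3, h4, h5, h6⟩ := hgB
  by_contra hninj
  -- kernel congruence of gB
  set θ : B → B → Prop := fun x y => gB x = gB y with hθ
  have hcong : IsRLCong ldb rdb θ := by
    refine ⟨⟨fun x => rfl, fun h => h.symm, fun h h' => h.trans h'⟩,
      ?_, ?_, ?_, ?_, ?_⟩ <;>
    · intro a b c d hab hcd
      simp only [hθ, h1, h2, h3, h5, h6, hab, hcd]
      rw [show gB a = gB b from hab, show gB c = gB d from hcd]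
  have hnt : ∃ x y : B, θ x y ∧ x ≠ y := by
    simp only [Function.Injective, not_forall] at hninj
    obtain ⟨x, y, hxy, hne⟩ := hninj
    exact ⟨x, y, hxy, hne⟩
  have hcollapse : ∀ a : A, gB (fB a) = 1 := by
    intro a
    have := hmono θ hcong hnt a
    simpa [hθ, h4] using this
  -- via commutativity and gC injective: fC a = 1 for all a
  have hfC1 : ∀ a : A, fC a = 1 := by
    intro a
    apply hgCinj
    rw [← comm a, hcollapse a, hgC.2.2.2.1]
  -- so A is trivial, contradicting nontriviality of the monolith
  obtain ⟨a, ha⟩ := hmono_nontriv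
  have : a = (1 : A) := hfCinj (by rw [hfC1 a, hfC.2.2.2.1])
  exact ha (by rw [this, hfB.2.2.2.1])
end

section
/- A conic idempotent residuated lattice A is conjunctive (satisfies γ(x ∧ y) = γ(x) ∧ γ(y), where γ(x) = x^{ℓr} ∧ x^{rℓ}) if and only if every block γ⁻¹(a), for a in the image of γ, is closed under binary meet (i.e., γ(x) = γ(y) implies γ(x ∧ y) = γ(x)). -/
structure IsResiduated {A : Type*} [Preorder A] [Mul A] (ld rd : A → A → A) : Prop where
  mul_le_iff_le_ld : ∀ x y z : A, x * y ≤ z ↔ y ≤ ld x z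
  mul_le_iff_le_rd : ∀ x y z : A, x * y ≤ z ↔ x ≤ rd z y

namespace IsResiduated

variable {A : Type*} [Lattice A] [Monoid A] {ld rd : A → A → A}

theorem mul_le_mul_left (h : IsResiduated ld rd) {a b : A} (c : A) (hab : a ≤ b) :
    c * a ≤ c * b :=
  (h.mul_le_iff_le_ld c a _).mpr (hab.trans ((h.mul_le_iff_le_ld c b _).mp le_rfl))

theorem mul_le_mul_right (h : IsResiduated ld rd) {a b : A} (c : A) (hab : a ≤ b) :
    a * c ≤ b * c :=
  (h.mul_le_iff_le_rd a c _).mpr (hab.trans ((h.mul_le_iff_le_rd b c _).mp le_rfl))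

theorem rd_one_mul_le (h : IsResiduated ld rd) (x : A) : rd 1 x * x ≤ 1 :=
  (h.mul_le_iff_le_rd _ _ _).mpr le_rfl

theorem mul_ld_one_le (h : IsResiduated ld rd) (x : A) : x * ld x 1 ≤ 1 :=
  (h.mul_le_iff_le_ld _ _ _).mpr le_rfl

theorem le_ld_rd_one (h : IsResiduated ld rd) (x : A) : x ≤ ld (rd 1 x) 1 :=
  (h.mul_le_iff_le_ld _ _ _).mp (h.rd_one_mul_le x)

theorem le_rd_ld_one (h : IsResiduated ld rd) (x : A) : x ≤ rd 1 (ld x 1) :=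
  (h.mul_le_iff_le_rd _ _ _).mp (h.mul_ld_one_le x)

theorem rd_one_antitone (h : IsResiduated ld rd) : Antitone (rd 1) := fun _ y hxy =>
  (h.mul_le_iff_le_rd _ _ _).mp ((h.mul_le_mul_left _ hxy).trans (h.rd_one_mul_le y))

theorem ld_one_antitone (h : IsResiduated ld rd) : Antitone (ld · 1) := fun _ y hxy =>
  (h.mul_le_iff_le_ld _ _ _).mp ((h.mul_le_mul_right _ hxy).trans (h.mul_ld_one_le y))

theorem gam_mono (h : IsResiduated ld rd) : Monotone (gam ld rd) := fun _ _ hxy =>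
  inf_le_inf (h.ld_one_antitone (h.rd_one_antitone hxy))
    (h.rd_one_antitone (h.ld_one_antitone hxy))

theorem gam_le_gam_of_le_gam (h : IsResiduated ld rd) {x y : A} (hxy : x ≤ gam ld rd y) :
    gam ld rd x ≤ gam ld rd y := by
  have hrd : rd 1 y ≤ rd 1 x :=
    (h.le_rd_ld_one _).trans (h.rd_one_antitone (hxy.trans inf_le_left))
  have hld : ld y 1 ≤ ld x 1 :=
    (h.le_ld_rd_one _).trans (h.ld_one_antitone (hxy.trans inf_le_right))
  exact inf_le_inf (h.ld_one_antitone hrd) (h.rd_one_antitone hld)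

theorem le_gam_of_commute (h : IsResiduated ld rd) (conic : ∀ a : A, a ≤ 1 ∨ 1 ≤ a)
    {x y : A} (hyx : ¬y ≤ x) (hc : Commute x y) : x ≤ gam ld rd y := by
  have hrd : rd 1 y * x ≤ 1 := (conic _).resolve_right fun h1 => hyx <|
    calc y = 1 * y := (one_mul y).symm
      _ ≤ rd 1 y * x * y := h.mul_le_mul_right y h1
      _ = rd 1 y * y * x := by rw [mul_assoc, hc.eq, ← mul_assoc]
      _ ≤ 1 * x := h.mul_le_mul_right x (h.rd_one_mul_le y)
      _ = x := one_mul x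
  have hld : x * ld y 1 ≤ 1 := (conic _).resolve_right fun h1 => hyx <|
    calc y = y * 1 := (mul_one y).symm
      _ ≤ y * (x * ld y 1) := h.mul_le_mul_left y h1
      _ = x * (y * ld y 1) := by rw [← mul_assoc, ← hc.eq, mul_assoc]
      _ ≤ x * 1 := h.mul_le_mul_left x (h.mul_ld_one_le y)
      _ = x := mul_one x
  exact le_inf ((h.mul_le_iff_le_ld _ _ _).mp hrd) ((h.mul_le_iff_le_rd _ _ _).mp hld)

theorem mul_eq_inf_of_le_one (h : IsResiduated ld rd) {u v : A}
    (hidem : IsIdempotentElem (u ⊓ v)) (hu : u ≤ 1) (hv : v ≤ 1) : u * v = u ⊓ v := by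
  refine le_antisymm ?_ ?_
  · exact le_inf ((h.mul_le_mul_left u hv).trans_eq (mul_one u))
      ((h.mul_le_mul_right v hu).trans_eq (one_mul v))
  · calc u ⊓ v = (u ⊓ v) * (u ⊓ v) := hidem.symm
      _ ≤ u * v := (h.mul_le_mul_right _ inf_le_left).trans (h.mul_le_mul_left u inf_le_right)

theorem mul_eq_sup_of_one_le (h : IsResiduated ld rd) {u v : A}
    (hidem : IsIdempotentElem (u ⊔ v)) (hu : 1 ≤ u) (hv : 1 ≤ v) : u * v = u ⊔ v := by
  refine le_antisymm ?_ ?_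
  · calc u * v ≤ (u ⊔ v) * (u ⊔ v) :=
          (h.mul_le_mul_right v le_sup_left).trans (h.mul_le_mul_left _ le_sup_right)
      _ = u ⊔ v := hidem
  · exact sup_le ((mul_one u).symm.trans_le (h.mul_le_mul_left u hv))
      ((one_mul v).symm.trans_le (h.mul_le_mul_right v hu))

theorem commute_of_not_le_of_not_le (h : IsResiduated ld rd)
    (conic : ∀ a : A, a ≤ 1 ∨ 1 ≤ a) (idem : ∀ x : A, x * x = x) {x y : A}
    (hxy : ¬x ≤ y) (hyx : ¬y ≤ x) : Commute x y := by
  rcases conic x with hx | hx <;> rcases conic y with hy | hy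
  · rw [Commute, SemiconjBy, h.mul_eq_inf_of_le_one (idem _) hx hy,
      h.mul_eq_inf_of_le_one (idem _) hy hx, inf_comm]
  · exact absurd (hx.trans hy) hxy
  · exact absurd (hy.trans hx) hyx
  · rw [Commute, SemiconjBy, h.mul_eq_sup_of_one_le (idem _) hx hy,
      h.mul_eq_sup_of_one_le (idem _) hy hx, sup_comm]

theorem gam_eq_of_not_le_of_not_le (h : IsResiduated ld rd) (conic : ∀ a : A, a ≤ 1 ∨ 1 ≤ a)
    (idem : ∀ x : A, x * x = x) {x y : A} (hxy : ¬x ≤ y) (hyx : ¬y ≤ x) :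
    gam ld rd x = gam ld rd y :=
  have hc := h.commute_of_not_le_of_not_le conic idem hxy hyx
  le_antisymm (h.gam_le_gam_of_le_gam (h.le_gam_of_commute conic hyx hc))
    (h.gam_le_gam_of_le_gam (h.le_gam_of_commute conic hxy hc.symm))

end IsResiduated

/-- A conic idempotent residuated lattice is conjunctive
(`γ(x ∧ y) = γ(x) ∧ γ(y)`) iff every block `γ⁻¹(a)` is closed under binary meet. -/
theorem stmt19 {A : Type*} [Lattice A] [Monoid A]
    (ld rd : A → A → A)
    (resl : ∀ x y z : A, x * y ≤ z ↔ y ≤ ld x z)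
    (resr : ∀ x y z : A, x * y ≤ z ↔ x ≤ rd z y)
    (conic : ∀ a : A, a ≤ 1 ∨ 1 ≤ a)
    (idem : ∀ x : A, x * x = x) :
    (∀ x y : A, gam ld rd (x ⊓ y) = gam ld rd x ⊓ gam ld rd y) ↔
    (∀ x y : A, gam ld rd x = gam ld rd y → gam ld rd (x ⊓ y) = gam ld rd x) := by
  have h : IsResiduated ld rd := ⟨resl, resr⟩
  refine ⟨fun hconj x y hxy => by rw [hconj, hxy, inf_idem], fun hblock x y => ?_⟩
  by_cases hxy : x ≤ y
  · rw [inf_eq_left.mpr hxy, inf_eq_left.mpr (h.gam_mono hxy)]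
  by_cases hyx : y ≤ x
  · rw [inf_eq_right.mpr hyx, inf_eq_right.mpr (h.gam_mono hyx)]
  have hsame_block := h.gam_eq_of_not_le_of_not_le conic idem hxy hyx
  rw [hblock x y hsame_block, hsame_block, inf_idem]
end
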